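/- The reduced string vertices satisfy the following symmetries: (1) 𝓕^{g,b}_{⋯|v₁⋯v_i|w₁⋯w_j|⋯} = (−1)^{(Σ_{k=1}^{i}|v_k|)(Σ_{k=1}^{j}|w_k|)} 𝓕^{g,b}_{⋯|w₁⋯w_j|v₁⋯v_i|⋯} (adjacent blocks may be exchanged at the cost of the Koszul sign), and (2) 𝓕^{g,b}_{⋯|v₁v₂⋯v_{i−1}v_i|⋯} = (−1)^{|v_i|(Σ_{k=1}^{i−1}|v_k|)} 𝓕^{g,b}_{⋯|v_i v₁ v₂⋯v_{i−1}|⋯} (each block may be cyclically rotated at the cost of the Koszul sign). -/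

import Mathlib

open Finset

noncomputable section

namespace Paper

variable (k : Type) [Field k]

/-- `msign m = (−1)^m`. -/
def msign (m : ℤ) : k := if Odd m then -1 else 1

/-- The Koszul sign of the action of a permutation `τ` on a tensor product of
homogeneous factors of degrees `d i`. -/
def koszulSign {n : ℕ} (d : Fin n → ℤ) (τ : Equiv.Perm (Fin n)) : k :=
  ∏ i : Fin n, ∏ j : Fin n,
    if i < j ∧ τ j < τ i ∧ Odd (d i) ∧ Odd (d j) then (-1 : k) else (1 : k)

variable (ι : Type) [Fintype ι] [DecidableEq ι] (deg : ι → ℤ)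

/-- The `n`-th tensor power of the graded vector space with basis `ι`, in coordinates. -/
abbrev TPow (n : ℕ) : Type := (Fin n → ι) →₀ k

/-- The Koszul-signed action of `τ ∈ Σ_n` on `A^{⊗n}`. -/
def permAct {n : ℕ} (τ : Equiv.Perm (Fin n)) : TPow k ι n →ₗ[k] TPow k ι n :=
  Finsupp.lift (TPow k ι n) k (Fin n → ι)
    (fun I => koszulSign k (fun p => deg (I p)) τ • Finsupp.single (I ∘ τ.symm) (1 : k))

/-- A (potential) basis element of `QO([n],G)`: a genus together with a multiset
of cycles in `[n] = Fin n`. -/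
abbrev QOEl (n : ℕ) : Type := ℕ × Multiset (Cycle (Fin n))

/-- The relabeling action of `σ ∈ Σ_n` on basis elements. -/
def qoAct {n : ℕ} (σ : Equiv.Perm (Fin n)) (x : QOEl n) : QOEl n :=
  (x.1, x.2.map (Cycle.map σ))

/-- Consecutive blocks of given lengths starting at a given offset. -/
def blocksAux : ℕ → List ℕ → List (List ℕ)
  | _, [] => []
  | s, (m :: rest) => ((List.range m).map (s + ·)) :: blocksAux (s + m) rest

/-- The canonical representative `\overline{(b_k)}^g` of the `Σ_n`-orbit of basis
elements of `QO([n],2g+b−1)` with b-sequence `(b_k)`: the cycles are listed with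
nondecreasing lengths, every nonempty cycle is a cyclic interval of consecutive
integers, and all elements of an earlier cycle are smaller than those of a later
one. -/
def canonEl (n : ℕ) (hn : 0 < n) (bk : ℕ → ℕ) (g : ℕ) : QOEl n :=
  (g, ((blocksAux 0 ((List.range (n + 1)).flatMap (fun m => List.replicate (bk m) m))).map
    (fun L => ((L.map (fun x => (⟨x % n, Nat.mod_lt _ hn⟩ : Fin n)) : List (Fin n)) :
      Cycle (Fin n))) : List (Cycle (Fin n))))

/-- The b-sequence associated to an ordered partition `(l₁,…,l_b̄)` together with
`b₀` empty parts: `b_k` is the number of parts equal to `k` for `k ≥ 1`, and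
`b_0 := b₀`. -/
def bseqOf {bbar : ℕ} (l : Fin bbar → ℕ) (b₀ : ℕ) : ℕ → ℕ :=
  fun m => if m = 0 then b₀ else (Finset.univ.filter (fun i => l i = m)).card

/-- `σ ∈ Σ_n` is the block permutation `β_{(l₁,…,l_b̄)}` : it moves the `t`-th
consecutive block of `[n]` (of length `l t`, starting at `Σ_{t'<t} l t'`),
order-preservingly, to the position occupied by the `β(t)`-th block of the
reordered partition. -/
def IsBlockPerm (n : ℕ) {bbar : ℕ} (l : Fin bbar → ℕ) (β : Equiv.Perm (Fin bbar))
    (σ : Equiv.Perm (Fin n)) : Prop :=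
  ∀ (t : Fin bbar) (j : ℕ), j < l t →
    ∀ h1 : (∑ t' : Fin bbar, if t' < t then l t' else 0) + j < n,
      ((σ ⟨(∑ t' : Fin bbar, if t' < t then l t' else 0) + j, h1⟩ : Fin n) : ℕ) =
        (∑ t' : Fin bbar, if β t' < β t then l t' else 0) + j

/-- `β` sorts the partition `(l₁,…,l_b̄)` : `l_{β⁻¹(1)} ≤ ⋯ ≤ l_{β⁻¹(b̄)}`. -/
def SortsBlocks {bbar : ℕ} (l : Fin bbar → ℕ) (β : Equiv.Perm (Fin bbar)) : Prop :=
  Monotone (fun t => l (β.symm t))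

end Paper

namespace Paper

variable {k : Type} [Field k] {ι : Type} [Fintype ι] [DecidableEq ι]

/-- The starting position of the `t`-th consecutive block of lengths `l`. -/
def startOf {bbar : ℕ} (l : Fin bbar → ℕ) (t : Fin bbar) : ℕ :=
  ∑ t' : Fin bbar, if t' < t then l t' else 0

/-- The total degree `Σ_{x ∈ block t} |v_x|` of the `t`-th block of the tensor
`v₁⊗⋯⊗vₙ` (given in coordinates by `I`). -/
def blockSum {bbar n : ℕ} (deg : ι → ℤ) (l : Fin bbar → ℕ) (t : Fin bbar)
    (I : Fin n → ι) : ℤ :=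
  ∑ x : Fin n, if startOf l t ≤ (x : ℕ) ∧ (x : ℕ) < startOf l t + l t
    then deg (I x) else 0

/-- `ρ ∈ Σ_n` cyclically rotates the `t₀`-th block (sending the entry at offset
`j` to offset `(j+1) mod l t₀`) and fixes everything else. -/
def IsBlockRotate (n : ℕ) {bbar : ℕ} (l : Fin bbar → ℕ) (t₀ : Fin bbar)
    (ρ : Equiv.Perm (Fin n)) : Prop :=
  (∀ x : Fin n, ((x : ℕ) < startOf l t₀ ∨ startOf l t₀ + l t₀ ≤ (x : ℕ)) → ρ x = x) ∧
  (∀ j, j < l t₀ → ∀ h1 : startOf l t₀ + j < n,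
    ((ρ ⟨startOf l t₀ + j, h1⟩ : Fin n) : ℕ) = startOf l t₀ + (j + 1) % l t₀)

/-- The reduced string vertex
`𝓕^{g,b}_{v₁,…,v_{l₁}|⋯} := −½ (f^{(b_k),g} ∘ β_{(l₁,…,l_b̄)})(v₁⊗⋯⊗vₙ)`,
evaluated on the basis tensor with coordinates `I`, where `σ` is the block
permutation `β_{(l)}` for a sorting `β` of `(l)`. -/
def Fvertex (deg : ι → ℤ) {n : ℕ} (f : TPow k ι n →ₗ[k] k)
    (σ : Equiv.Perm (Fin n)) (I : Fin n → ι) : k :=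
  - (2 : k)⁻¹ * f (permAct k ι deg σ (Finsupp.single I 1))

end Paper

/-! The Koszul action is a group action, so for `σ = τ * σ' * ρ` with `f` invariant under `τ` the
vertex `𝓕` built from `σ` is the Koszul sign of `ρ` times the vertex built from `σ'`, evaluated
on the relabelled tensor. In both identities `τ` (namely `σ (σ' ρ)⁻¹`, resp. `σ ρ⁻¹ σ⁻¹`) sends
every cycle of the canonical representative `\overline{(b_k)}^g` onto a canonical cycle of the
same length, cyclically, so it lies in the stabilizer. The Koszul sign of `ρ` is then read off
its inversions: for the exchange of adjacent blocks they are the pairs (entry of the first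
block, entry of the second), for the rotation of a block the pairs (earlier entry, last entry). -/

theorem Fintype.prod_prod_eq_prod_prod_lt {α M : Type*} [Fintype α] [LinearOrder α]
    [CommMonoid M] (X : α → α → M) (hX : ∀ i, X i i = 1) :
    ∏ i, ∏ j, X i j = ∏ i, ∏ j, if i < j then X i j * X j i else 1 := by
  have hsplit : ∀ i, ∏ j, X i j =
      (∏ j, if i < j then X i j else 1) * ∏ j, if j < i then X i j else 1 := by
    intro i
    rw [← Finset.prod_mul_distrib]
    refine Finset.prod_congr rfl fun j _ => ?_
    rcases lt_trichotomy i j with h | rfl | h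
    · simp [h, h.not_gt]
    · simp [hX]
    · simp [h, h.not_gt]
  rw [Finset.prod_congr rfl fun i _ => hsplit i, Finset.prod_mul_distrib,
    Finset.prod_comm (f := fun i j => if j < i then X i j else 1), ← Finset.prod_mul_distrib]
  refine Finset.prod_congr rfl fun i _ => ?_
  rw [← Finset.prod_mul_distrib]
  refine Finset.prod_congr rfl fun j _ => ?_
  split_ifs <;> simp

theorem List.count_ofFn {α : Type*} [DecidableEq α] {N : ℕ} (m : Fin N → α) (a : α) :
    (List.ofFn m).count a = #{i | m i = a} := by
  rw [← Multiset.coe_count, ← Fin.univ_val_map, Multiset.count_map, card_def, filter_val]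
  simp only [eq_comm]

theorem List.map_range_add_mod_eq_rotate {α : Type*} (M c : ℕ) (e : ℕ → α) :
    (List.range M).map (fun j => e ((j + c) % M)) = ((List.range M).map e).rotate c := by
  refine List.ext_getElem (by simp) fun i h₁ h₂ => ?_
  simp [List.getElem_rotate]

theorem Cycle.map_perm_mul {α : Type*} (σ τ : Equiv.Perm α) (C : Cycle α) :
    C.map ⇑(σ * τ) = (C.map τ).map σ := by
  induction C using Quotient.inductionOn'
  simp [List.map_map]

theorem Cycle.map_symm_of_map_eq {α : Type*} {e : Equiv.Perm α} {C D : Cycle α}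
    (h : C.map e = D) : D.map e.symm = C := by
  subst h
  induction C using Quotient.inductionOn'
  simp

namespace Paper

variable {k : Type} [Field k] {ι : Type}

section KoszulSign

lemma msign_add (x y : ℤ) : msign k (x + y) = msign k x * msign k y := by
  unfold msign
  by_cases hx : Odd x <;> by_cases hy : Odd y <;> simp [hx, hy, Int.odd_add, ← Int.not_odd_iff_even]

lemma msign_sum {α : Type*} (s : Finset α) (h : α → ℤ) :
    msign k (∑ i ∈ s, h i) = ∏ i ∈ s, msign k (h i) := by
  classical
  induction s using Finset.induction with
  | empty => simp [msign]
  | insert a s ha ih => rw [sum_insert ha, prod_insert ha, msign_add, ih]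

lemma msign_mul (x y : ℤ) : msign k (x * y) = if Odd x ∧ Odd y then -1 else 1 := by
  simp [msign, Int.odd_mul]

lemma koszulSign_mul {n : ℕ} (d : Fin n → ℤ) (τ ρ : Equiv.Perm (Fin n)) :
    koszulSign k d (τ * ρ) = koszulSign k (d ∘ ρ.symm) τ * koszulSign k d ρ := by
  have hτ : koszulSign k (d ∘ ρ.symm) τ = ∏ i, ∏ j,
      if ρ i < ρ j ∧ τ (ρ j) < τ (ρ i) ∧ Odd (d i) ∧ Odd (d j) then (-1 : k) else 1 := by
    rw [koszulSign, ← Equiv.prod_comp ρ]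
    refine prod_congr rfl fun i _ => ?_
    rw [← Equiv.prod_comp ρ]
    simp
  rw [hτ, koszulSign, koszulSign]
  simp only [← prod_mul_distrib]
  refine (Fintype.prod_prod_eq_prod_prod_lt _ (by simp)).trans
    (Eq.trans ?_ (Fintype.prod_prod_eq_prod_prod_lt _ (by simp)).symm)
  refine prod_congr rfl fun i _ => prod_congr rfl fun j _ => ?_
  -- for `i < j`: `τ * ρ` inverts `(i, j)` iff exactly one of `ρ` and `τ` (at `(ρ i, ρ j)`) does
  by_cases hij : i < j
  · have hρ : ρ i ≠ ρ j := ρ.injective.ne hij.ne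
    have hτρ : τ (ρ i) ≠ τ (ρ j) := τ.injective.ne hρ
    rcases hρ.lt_or_gt with h1 | h1 <;> rcases hτρ.lt_or_gt with h2 | h2 <;>
      by_cases hi : Odd (d i) <;> by_cases hj : Odd (d j) <;>
      simp [hij, hij.not_gt, h1, h1.not_gt, h2, h2.not_gt, hi, hj]
  · simp [hij]

lemma koszulSign_eq_msign_of_inversions {n : ℕ} (d : Fin n → ℤ) (ρ : Equiv.Perm (Fin n))
    (S T : Finset (Fin n)) (h : ∀ i j, i < j ∧ ρ j < ρ i ↔ i ∈ S ∧ j ∈ T) :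
    koszulSign k d ρ = msign k ((∑ i ∈ S, d i) * ∑ j ∈ T, d j) := by
  simp only [sum_mul_sum, msign_sum, msign_mul, koszulSign, ← and_assoc, h]
  rw [← Fintype.prod_ite_mem S]
  refine prod_congr rfl fun i _ => ?_
  by_cases hi : i ∈ S
  · rw [if_pos hi, ← Fintype.prod_ite_mem T]
    refine prod_congr rfl fun j _ => ?_
    by_cases hj : j ∈ T <;> simp [hi, hj]
  · simp [hi]

end KoszulSign

section PermAct

variable {n : ℕ} (deg : ι → ℤ)

lemma permAct_single (τ : Equiv.Perm (Fin n)) (I : Fin n → ι) :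
    permAct k ι deg τ (Finsupp.single I 1) =
      koszulSign k (fun p => deg (I p)) τ • Finsupp.single (I ∘ τ.symm) 1 := by
  rw [permAct, Finsupp.lift_apply, Finsupp.sum_single_index (by simp), one_smul]

lemma permAct_mul (τ ρ : Equiv.Perm (Fin n)) :
    permAct k ι deg (τ * ρ) = permAct k ι deg τ ∘ₗ permAct k ι deg ρ := by
  ext I : 2
  simp only [LinearMap.comp_apply, Finsupp.lsingle_apply, permAct_single, map_smul,
    koszulSign_mul, smul_smul, mul_comm]
  rfl

lemma Fvertex_eq_koszulSign_mul (f : TPow k ι n →ₗ[k] k) {τ σ σ' ρ : Equiv.Perm (Fin n)}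
    (hτ : f ∘ₗ permAct k ι deg τ = f) (hσ : σ = τ * σ' * ρ) (I : Fin n → ι) :
    Fvertex deg f σ I = koszulSign k (fun p => deg (I p)) ρ * Fvertex deg f σ' (I ∘ ρ.symm) := by
  subst hσ
  rw [Fvertex, Fvertex, permAct_mul, permAct_mul, LinearMap.comp_apply, LinearMap.comp_apply,
    ← LinearMap.comp_apply f, hτ, permAct_single deg ρ, map_smul, map_smul, smul_eq_mul]
  ring

end PermAct

section Blocks

variable {bbar : ℕ} (l : Fin bbar → ℕ)

lemma startOf_eq_sum_Iio (t : Fin bbar) : startOf l t = ∑ t' ∈ Iio t, l t' := by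
  rw [startOf, ← sum_filter]
  congr 1
  ext
  simp

lemma startOf_add_self (t : Fin bbar) : startOf l t + l t = ∑ t' ∈ Iic t, l t' := by
  rw [startOf_eq_sum_Iio, ← Iio_insert, sum_insert (by simp), add_comm]

lemma startOf_add_self_le_startOf {t t' : Fin bbar} (h : t < t') :
    startOf l t + l t ≤ startOf l t' := by
  rw [startOf_add_self, startOf_eq_sum_Iio]
  exact sum_le_sum_of_subset fun x hx => mem_Iio.2 ((mem_Iic.1 hx).trans_lt h)

lemma startOf_add_self_le_sum (t : Fin bbar) : startOf l t + l t ≤ ∑ t', l t' := by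
  rw [startOf_add_self]
  exact sum_le_sum_of_subset (subset_univ _)

lemma startOf_eq_of_val_eq_succ {t₀ t₁ : Fin bbar} (h : (t₁ : ℕ) = t₀ + 1) :
    startOf l t₁ = startOf l t₀ + l t₀ := by
  rw [startOf_add_self, startOf_eq_sum_Iio]
  congr 1
  ext
  simp only [mem_Iio, mem_Iic, Fin.lt_def, Fin.le_def]
  omega

lemma startOf_zero (m : Fin (bbar + 1) → ℕ) : startOf m 0 = 0 := by
  simp [startOf]

lemma startOf_succ (m : Fin (bbar + 1) → ℕ) (u : Fin bbar) :
    startOf m u.succ = m 0 + startOf (fun i => m i.succ) u := by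
  simp [startOf, Fin.sum_univ_succ, Fin.succ_pos]

lemma exists_startOf_add_eq {x : ℕ} (hx : x < ∑ t, l t) :
    ∃ t j, j < l t ∧ startOf l t + j = x := by
  induction bbar generalizing x with
  | zero => simp at hx
  | succ b ih =>
    rw [Fin.sum_univ_succ] at hx
    by_cases h0 : x < l 0
    · exact ⟨0, x, h0, by rw [startOf_zero, zero_add]⟩
    · obtain ⟨t, j, hj, hx'⟩ := ih (fun i => l i.succ) (x := x - l 0) (by omega)
      exact ⟨t.succ, j, hj, by rw [startOf_succ]; omega⟩

lemma startOf_comp_symm_apply (β : Equiv.Perm (Fin bbar)) (t : Fin bbar) :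
    startOf (l ∘ β.symm) (β t) = ∑ t', if β t' < β t then l t' else 0 :=
  Fintype.sum_equiv β.symm _ _ (by simp)

lemma startOf_comp_swap {t₀ t₁ : Fin bbar} (h : (t₁ : ℕ) = t₀ + 1) (u : Fin bbar) :
    startOf (l ∘ Equiv.swap t₀ t₁) u = if u = t₁ then startOf l t₀ + l t₁ else startOf l u := by
  have hne : t₀ ≠ t₁ := fun e => by simp [e] at h
  split_ifs with hu
  · rw [hu, startOf_eq_sum_Iio, startOf_eq_sum_Iio]
    have hIio : Iio t₁ = insert t₀ (Iio t₀) := by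
      ext
      simp only [mem_Iio, mem_insert, Fin.lt_def, Fin.ext_iff]
      omega
    rw [hIio, sum_insert (by simp), add_comm]
    simp only [Function.comp_apply, Equiv.swap_apply_left]
    congr 1
    refine sum_congr rfl fun x hx => ?_
    have hx : (x : ℕ) < t₀ := Fin.lt_def.1 (mem_Iio.1 hx)
    rw [Equiv.swap_apply_of_ne_of_ne (by omega) (by omega)]
  · rw [startOf_eq_sum_Iio, startOf_eq_sum_Iio]
    refine sum_equiv (Equiv.swap t₀ t₁) (fun x => ?_) fun _ _ => rfl
    have hu : (u : ℕ) ≠ t₁ := fun e => hu (Fin.ext e)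
    simp only [mem_Iio, Equiv.swap_apply_def, Fin.lt_def]
    split_ifs with h₀ h₁ <;> simp only [Fin.ext_iff] at * <;> omega

end Blocks

section BlockPositions

variable {n bbar : ℕ} {l : Fin bbar → ℕ}

def block (n : ℕ) (l : Fin bbar → ℕ) (t : Fin bbar) : Finset (Fin n) :=
  univ.filter fun x => startOf l t ≤ x ∧ (x : ℕ) < startOf l t + l t

lemma blockSum_eq_sum_block (deg : ι → ℤ) (t : Fin bbar) (I : Fin n → ι) :
    blockSum deg l t I = ∑ x ∈ block n l t, deg (I x) :=
  (sum_filter _ _).symm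

lemma IsBlockPerm.val_apply {β : Equiv.Perm (Fin bbar)} {σ : Equiv.Perm (Fin n)}
    (h : IsBlockPerm n l β σ) {t : Fin bbar} {j : ℕ} (hj : j < l t)
    (hx : startOf l t + j < n) :
    (σ ⟨startOf l t + j, hx⟩ : ℕ) = startOf (l ∘ β.symm) (β t) + j := by
  rw [startOf_comp_symm_apply]
  exact h t j hj hx

lemma exists_eq_startOf_add (hsum : ∑ t, l t = n) (x : Fin n) :
    ∃ t j, j < l t ∧ ∃ hx : startOf l t + j < n, x = ⟨startOf l t + j, hx⟩ := by
  obtain ⟨t, j, hj, hx⟩ := exists_startOf_add_eq l (x := x) (hsum ▸ x.isLt)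
  exact ⟨t, j, hj, hx ▸ x.isLt, Fin.ext hx.symm⟩

lemma IsBlockPerm.val_apply_swap (hsum : ∑ t, l t = n) {t₀ t₁ : Fin bbar}
    (ht : (t₁ : ℕ) = t₀ + 1) {ρ : Equiv.Perm (Fin n)}
    (h : IsBlockPerm n l (Equiv.swap t₀ t₁) ρ) (x : Fin n) :
    (ρ x : ℕ) =
      if (x : ℕ) < startOf l t₀ ∨ startOf l t₀ + l t₀ + l t₁ ≤ x then (x : ℕ)
      else if (x : ℕ) < startOf l t₀ + l t₀ then x + l t₁ else x - l t₀ := by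
  obtain ⟨t, j, hj, hx, rfl⟩ := exists_eq_startOf_add hsum x
  have hs₁ := startOf_eq_of_val_eq_succ l ht
  rw [h.val_apply hj, Equiv.symm_swap, startOf_comp_swap l ht, Equiv.swap_apply_def]
  rcases lt_trichotomy t t₀ with h₀ | rfl | h₀
  · have := startOf_add_self_le_startOf l h₀
    have h₁ : t ≠ t₁ := fun e => by rw [Fin.lt_def, e] at h₀; omega
    simp only [h₀.ne, h₁, if_false]
    split_ifs <;> omega
  · have h₁ : t ≠ t₁ := fun e => by rw [e] at ht; omega
    simp only [h₁, if_true, if_false]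
    split_ifs <;> omega
  · rcases eq_or_ne t t₁ with rfl | h₁
    · simp only [h₀.ne', if_true, if_false]
      split_ifs <;> omega
    · have := startOf_add_self_le_startOf l (show t₁ < t by rw [Fin.lt_def] at h₀ ⊢; omega)
      simp only [h₀.ne', h₁, if_false]
      split_ifs <;> omega

lemma IsBlockRotate.val_apply {t₀ : Fin bbar} {ρ : Equiv.Perm (Fin n)}
    (h : IsBlockRotate n l t₀ ρ) (x : Fin n) :
    (ρ x : ℕ) =
      if (x : ℕ) < startOf l t₀ ∨ startOf l t₀ + l t₀ ≤ x then (x : ℕ)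
      else if (x : ℕ) = startOf l t₀ + l t₀ - 1 then startOf l t₀ else x + 1 := by
  split_ifs with hout hlast
  · rw [h.1 x hout]
  · have := h.2 _ (by omega) (by omega : startOf l t₀ + (x - startOf l t₀) < n)
    simp only [show startOf l t₀ + (x - startOf l t₀) = x by omega] at this
    rw [this, show x - startOf l t₀ + 1 = l t₀ by omega, Nat.mod_self, add_zero]
  · have := h.2 _ (by omega) (by omega : startOf l t₀ + (x - startOf l t₀) < n)
    simp only [show startOf l t₀ + (x - startOf l t₀) = x by omega] at this
    rw [this, Nat.mod_eq_of_lt (by omega)]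
    omega

lemma koszulSign_eq_of_isBlockPerm_swap (hsum : ∑ t, l t = n) {t₀ t₁ : Fin bbar}
    (ht : (t₁ : ℕ) = t₀ + 1) {ρ : Equiv.Perm (Fin n)}
    (h : IsBlockPerm n l (Equiv.swap t₀ t₁) ρ) (d : Fin n → ℤ) :
    koszulSign k d ρ = msign k ((∑ x ∈ block n l t₀, d x) * ∑ x ∈ block n l t₁, d x) := by
  refine koszulSign_eq_msign_of_inversions d ρ _ _ fun i j => ?_
  have hi := h.val_apply_swap hsum ht i
  have hj := h.val_apply_swap hsum ht j
  simp only [block, mem_filter, mem_univ, true_and, Fin.lt_def, startOf_eq_of_val_eq_succ l ht]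
  split_ifs at hi hj <;> omega

lemma koszulSign_eq_of_isBlockRotate {t₀ : Fin bbar} {ρ : Equiv.Perm (Fin n)}
    (h : IsBlockRotate n l t₀ ρ) {last : Fin n} (hlast : (last : ℕ) = startOf l t₀ + l t₀ - 1)
    (d : Fin n → ℤ) :
    koszulSign k d ρ = msign k ((∑ x ∈ (block n l t₀).erase last, d x) * d last) := by
  rw [← sum_singleton d last]
  refine koszulSign_eq_msign_of_inversions d ρ _ _ fun i j => ?_
  have hi := h.val_apply i
  have hj := h.val_apply j
  simp only [block, mem_erase, mem_filter, mem_singleton, mem_univ, true_and, Fin.lt_def,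
    Fin.ext_iff, hlast]
  split_ifs at hi hj <;> omega

end BlockPositions

section SortedLengths

variable {bbar : ℕ}

lemma SortsBlocks.comp_symm_eq {l : Fin bbar → ℕ} {β β' e : Equiv.Perm (Fin bbar)}
    (hβ : SortsBlocks l β) (hβ' : SortsBlocks (l ∘ e) β') : l ∘ β.symm = (l ∘ e) ∘ β'.symm := by
  refine List.ofFn_inj.1 (List.Perm.eq_of_pairwise' (r := (· ≤ ·)) ?_ ?_ ?_)
  · exact List.pairwise_ofFn.2 fun i j hij => hβ hij.le
  · exact List.pairwise_ofFn.2 fun i j hij => hβ' hij.le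
  · exact ((Equiv.Perm.ofFn_comp_perm _ _).trans
      (Equiv.Perm.ofFn_comp_perm _ _).symm).trans (Equiv.Perm.ofFn_comp_perm _ _).symm

lemma flatMap_replicate_bseqOf_perm {n : ℕ} {l : Fin bbar → ℕ} (hpos : ∀ i, 0 < l i)
    (hsum : ∑ i, l i = n) (b₀ : ℕ) :
    ((List.range (n + 1)).flatMap fun v => List.replicate (bseqOf l b₀ v) v).Perm
      (List.replicate b₀ 0 ++ List.ofFn l) := by
  have hle : ∀ i, l i ≤ n := fun i => hsum ▸ single_le_sum (by simp) (mem_univ i)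
  refine List.perm_iff_count.2 fun a => ?_
  have hcount : ((List.range (n + 1)).map
      (List.count a ∘ fun v => List.replicate (bseqOf l b₀ v) v)).sum =
      ∑ v ∈ range (n + 1), if v = a then bseqOf l b₀ v else 0 := by
    simp only [Function.comp_def, List.count_replicate, beq_iff_eq]
    rfl
  rw [List.count_flatMap, hcount, sum_ite_eq', List.count_append, List.count_ofFn,
    List.count_replicate]
  simp only [mem_range, beq_iff_eq]
  rcases Nat.eq_zero_or_pos a with rfl | ha
  · simp [bseqOf, (hpos _).ne']
  · have hb : bseqOf l b₀ a = #{i | l i = a} := if_neg ha.ne'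
    rw [if_neg ha.ne, zero_add]
    split_ifs with h
    · exact hb
    · refine (card_eq_zero.2 (filter_eq_empty_iff.2 fun i _ => ?_)).symm
      have := hle i
      omega

lemma flatMap_replicate_bseqOf {n : ℕ} {l : Fin bbar → ℕ} {β : Equiv.Perm (Fin bbar)}
    (hβ : SortsBlocks l β) (hpos : ∀ i, 0 < l i) (hsum : ∑ i, l i = n) (b₀ : ℕ) :
    (List.range (n + 1)).flatMap (fun v => List.replicate (bseqOf l b₀ v) v) =
      List.replicate b₀ 0 ++ List.ofFn (l ∘ β.symm) := by
  refine List.Perm.eq_of_pairwise' (r := (· ≤ ·)) ?_ ?_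
    ((flatMap_replicate_bseqOf_perm hpos hsum b₀).trans
      (List.perm_append_left_iff _ |>.2 (Equiv.Perm.ofFn_comp_perm _ _).symm))
  · refine List.pairwise_flatMap.2 ⟨fun a _ => List.pairwise_replicate.2 (.inr le_rfl), ?_⟩
    refine List.pairwise_lt_range.imp fun hlt x hx y hy => ?_
    rw [List.eq_of_mem_replicate hx, List.eq_of_mem_replicate hy]
    exact hlt.le
  · refine List.pairwise_append.2 ⟨List.pairwise_replicate.2 (.inr le_rfl),
      List.pairwise_ofFn.2 fun i j hij => hβ hij.le, fun x hx y _ => ?_⟩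
    rw [List.eq_of_mem_replicate hx]
    exact Nat.zero_le y

end SortedLengths

section CanonicalCycles

variable {n bbar : ℕ}

lemma blocksAux_replicate_zero (s c : ℕ) (L : List ℕ) :
    blocksAux s (List.replicate c 0 ++ L) = List.replicate c [] ++ blocksAux s L := by
  induction c with
  | zero => rfl
  | succ c ih => simp [List.replicate_succ, blocksAux, ih]

lemma blocksAux_ofFn (s : ℕ) (m : Fin bbar → ℕ) :
    blocksAux s (List.ofFn m) =
      List.ofFn fun u => (List.range (m u)).map (s + startOf m u + ·) := by
  induction bbar generalizing s with
  | zero => rfl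
  | succ b ih =>
    rw [List.ofFn_succ, blocksAux, ih, List.ofFn_succ, startOf_zero]
    simp only [startOf_succ, add_zero, add_assoc]

-- The entries are `< n` once `∑ i, l i = n`; the `% n` is the one in `canonEl`.
def blockCycle (hn : 0 < n) (l : Fin bbar → ℕ) (t : Fin bbar) : Cycle (Fin n) :=
  ((List.range (l t)).map fun j => (⟨(startOf l t + j) % n, Nat.mod_lt _ hn⟩ : Fin n) :
    Cycle (Fin n))

lemma canonEl_bseqOf (hn : 0 < n) {l : Fin bbar → ℕ} {β : Equiv.Perm (Fin bbar)}
    (hβ : SortsBlocks l β) (hpos : ∀ i, 0 < l i) (hsum : ∑ i, l i = n) (b₀ g : ℕ) :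
    canonEl n hn (bseqOf l b₀) g =
      (g, ((List.replicate b₀ Cycle.nil ++ List.ofFn (blockCycle hn (l ∘ β.symm)) :
        List (Cycle (Fin n))) : Multiset (Cycle (Fin n)))) := by
  rw [canonEl, flatMap_replicate_bseqOf hβ hpos hsum, blocksAux_replicate_zero, blocksAux_ofFn,
    List.map_append, List.map_replicate, List.map_ofFn]
  simp only [zero_add, Function.comp_def, List.map_map, List.map_nil]
  rfl

lemma qoAct_eq_self_of_map {bb : ℕ} (τ : Equiv.Perm (Fin n)) (θ : Equiv.Perm (Fin bb))
    (C : Fin bb → Cycle (Fin n)) (hC : ∀ u, (C u).map τ = C (θ u)) (b₀ g : ℕ) :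
    qoAct τ (g, ((List.replicate b₀ Cycle.nil ++ List.ofFn C : List (Cycle (Fin n))) :
      Multiset (Cycle (Fin n)))) =
      (g, ((List.replicate b₀ Cycle.nil ++ List.ofFn C : List (Cycle (Fin n))) :
        Multiset (Cycle (Fin n)))) := by
  rw [qoAct, Multiset.map_coe, List.map_append, List.map_replicate, List.map_ofFn]
  have : Cycle.map τ ∘ C = C ∘ θ := funext hC
  rw [this, Cycle.map_nil]
  exact congrArg _ (Multiset.coe_eq_coe.2 ((List.perm_append_left_iff _).2
    (Equiv.Perm.ofFn_comp_perm _ _)))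

lemma IsBlockPerm.map_blockCycle (hn : 0 < n) {l : Fin bbar → ℕ} (hsum : ∑ i, l i = n)
    {β : Equiv.Perm (Fin bbar)} {σ : Equiv.Perm (Fin n)} (h : IsBlockPerm n l β σ)
    (t : Fin bbar) : (blockCycle hn l t).map σ = blockCycle hn (l ∘ β.symm) (β t) := by
  have hsum' : ∑ i, (l ∘ β.symm) i = n := (Equiv.sum_comp β.symm l).trans hsum
  have hlen : (l ∘ β.symm) (β t) = l t := by simp
  rw [blockCycle, blockCycle, Cycle.map_coe, List.map_map, hlen]
  congr 1
  refine List.map_congr_left fun j hj => ?_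
  have hj := List.mem_range.1 hj
  have hx : startOf l t + j < n := by have := startOf_add_self_le_sum l t; omega
  have hx' : startOf (l ∘ β.symm) (β t) + j < n := by
    have := startOf_add_self_le_sum (l ∘ β.symm) (β t); rw [hlen] at this; omega
  ext
  simp only [Function.comp_apply, Nat.mod_eq_of_lt hx, Nat.mod_eq_of_lt hx']
  exact h.val_apply hj hx

lemma IsBlockRotate.map_blockCycle (hn : 0 < n) {l : Fin bbar → ℕ} (hsum : ∑ i, l i = n)
    {t₀ : Fin bbar} {ρ : Equiv.Perm (Fin n)} (h : IsBlockRotate n l t₀ ρ) (t : Fin bbar) :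
    (blockCycle hn l t).map ρ = blockCycle hn l t := by
  rw [blockCycle, Cycle.map_coe, List.map_map, Cycle.coe_eq_coe]
  have hx : ∀ j < l t, startOf l t + j < n := fun j hj => by
    have := startOf_add_self_le_sum l t; omega
  have hmod : ∀ j < l t, startOf l t + j = (startOf l t + j) % n := fun j hj =>
    (Nat.mod_eq_of_lt (hx j hj)).symm
  set e : ℕ → Fin n := fun j => ⟨(startOf l t + j) % n, Nat.mod_lt _ hn⟩
  rcases eq_or_ne t t₀ with rfl | hne
  · have hrot : (List.range (l t)).map (ρ ∘ e) = ((List.range (l t)).map e).rotate 1 := by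
      rw [← List.map_range_add_mod_eq_rotate]
      refine List.map_congr_left fun j hj => ?_
      have hj := List.mem_range.1 hj
      have hj' := Nat.mod_lt (j + 1) (show 0 < l t by omega)
      ext
      simp only [e, Function.comp_apply, ← hmod j hj, ← hmod _ hj']
      exact h.2 j hj (hx j hj)
    rw [hrot]
    exact List.IsRotated.forall _ 1
  · convert List.IsRotated.refl _ using 1
    refine List.map_congr_left fun j hj => ?_
    have hj := List.mem_range.1 hj
    simp only [e, Function.comp_apply, ← hmod j hj]
    refine (h.1 _ ?_).symm
    dsimp only
    rcases hne.lt_or_gt with hlt | hlt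
    · have := startOf_add_self_le_startOf l hlt
      omega
    · have := startOf_add_self_le_startOf l hlt
      omega

end CanonicalCycles

section Symmetries

variable {n bbar : ℕ} {l : Fin bbar → ℕ}

lemma qoAct_canonEl_eq_self (hn : 0 < n) {β : Equiv.Perm (Fin bbar)} (hβ : SortsBlocks l β)
    (hpos : ∀ i, 0 < l i) (hsum : ∑ i, l i = n) (b₀ g : ℕ) {τ : Equiv.Perm (Fin n)}
    (θ : Equiv.Perm (Fin bbar))
    (hτ : ∀ u, (blockCycle hn (l ∘ β.symm) u).map τ = blockCycle hn (l ∘ β.symm) (θ u)) :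
    qoAct τ (canonEl n hn (bseqOf l b₀) g) = canonEl n hn (bseqOf l b₀) g := by
  rw [canonEl_bseqOf hn hβ hpos hsum]
  exact qoAct_eq_self_of_map τ θ _ hτ b₀ g

lemma Fvertex_swap_adjacent_blocks (deg : ι → ℤ) (hn : 0 < n) (hpos : ∀ i, 0 < l i)
    (hsum : ∑ i, l i = n) (b₀ g : ℕ) (f : TPow k ι n →ₗ[k] k)
    (hf : ∀ τ : Equiv.Perm (Fin n),
      qoAct τ (canonEl n hn (bseqOf l b₀) g) = canonEl n hn (bseqOf l b₀) g →
      f ∘ₗ permAct k ι deg τ = f)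
    {t₀ t₁ : Fin bbar} (ht : (t₁ : ℕ) = t₀ + 1) {β β' : Equiv.Perm (Fin bbar)}
    {σ σ' ρ : Equiv.Perm (Fin n)} (hβ : SortsBlocks l β) (hσ : IsBlockPerm n l β σ)
    (hβ' : SortsBlocks (l ∘ Equiv.swap t₀ t₁) β')
    (hσ' : IsBlockPerm n (l ∘ Equiv.swap t₀ t₁) β' σ')
    (hρ : IsBlockPerm n l (Equiv.swap t₀ t₁) ρ) (I : Fin n → ι) :
    Fvertex deg f σ I =
      msign k (blockSum deg l t₀ I * blockSum deg l t₁ I) * Fvertex deg f σ' (I ∘ ρ.symm) := by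
  set sw := Equiv.swap t₀ t₁
  have hm : (l ∘ sw) ∘ β'.symm = l ∘ β.symm := (hβ.comp_symm_eq hβ').symm
  have hsum' : ∑ i, (l ∘ sw) i = n := (Equiv.sum_comp sw l).trans hsum
  have hstab : qoAct (σ * ρ⁻¹ * σ'⁻¹) (canonEl n hn (bseqOf l b₀) g) =
      canonEl n hn (bseqOf l b₀) g := by
    refine qoAct_canonEl_eq_self hn hβ hpos hsum b₀ g (β * sw * β'⁻¹) fun u => ?_
    have hσ'u : (blockCycle hn (l ∘ β.symm) u).map σ'.symm = blockCycle hn (l ∘ sw) (β'.symm u) :=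
      Cycle.map_symm_of_map_eq (by rw [hσ'.map_blockCycle hn hsum', hm, Equiv.apply_symm_apply])
    have hρu : (blockCycle hn (l ∘ sw) (β'.symm u)).map ρ.symm = blockCycle hn l (sw (β'.symm u)) :=
      Cycle.map_symm_of_map_eq (by
        rw [hρ.map_blockCycle hn hsum, Equiv.symm_swap, Equiv.swap_apply_self])
    rw [Cycle.map_perm_mul, Cycle.map_perm_mul, Equiv.Perm.inv_def, Equiv.Perm.inv_def, hσ'u,
      hρu, hσ.map_blockCycle hn hsum]
    rfl
  rw [Fvertex_eq_koszulSign_mul deg f (hf _ hstab) (show σ = σ * ρ⁻¹ * σ'⁻¹ * σ' * ρ by group) I,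
    koszulSign_eq_of_isBlockPerm_swap hsum ht hρ, blockSum_eq_sum_block, blockSum_eq_sum_block]

lemma Fvertex_rotate_block (deg : ι → ℤ) (hn : 0 < n) (hpos : ∀ i, 0 < l i)
    (hsum : ∑ i, l i = n) (b₀ g : ℕ) (f : TPow k ι n →ₗ[k] k)
    (hf : ∀ τ : Equiv.Perm (Fin n),
      qoAct τ (canonEl n hn (bseqOf l b₀) g) = canonEl n hn (bseqOf l b₀) g →
      f ∘ₗ permAct k ι deg τ = f)
    {t₀ : Fin bbar} {β : Equiv.Perm (Fin bbar)} {σ ρ : Equiv.Perm (Fin n)}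
    (hβ : SortsBlocks l β) (hσ : IsBlockPerm n l β σ) (hρ : IsBlockRotate n l t₀ ρ)
    (I : Fin n → ι) :
    Fvertex deg f σ I =
      msign k (deg (I ⟨(startOf l t₀ + l t₀ - 1) % n, Nat.mod_lt _ hn⟩) *
        (blockSum deg l t₀ I - deg (I ⟨(startOf l t₀ + l t₀ - 1) % n, Nat.mod_lt _ hn⟩))) *
        Fvertex deg f σ (I ∘ ρ.symm) := by
  set last : Fin n := ⟨(startOf l t₀ + l t₀ - 1) % n, Nat.mod_lt _ hn⟩
  have hlast : (last : ℕ) = startOf l t₀ + l t₀ - 1 := by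
    have := startOf_add_self_le_sum l t₀
    exact Nat.mod_eq_of_lt (by have := hpos t₀; omega)
  have hmem : last ∈ block n l t₀ := by
    simp only [block, mem_filter, mem_univ, true_and, hlast]
    have := hpos t₀
    omega
  have hstab : qoAct (σ * ρ⁻¹ * σ⁻¹) (canonEl n hn (bseqOf l b₀) g) =
      canonEl n hn (bseqOf l b₀) g := by
    refine qoAct_canonEl_eq_self hn hβ hpos hsum b₀ g 1 fun u => ?_
    have hσu : (blockCycle hn (l ∘ β.symm) u).map σ.symm = blockCycle hn l (β.symm u) :=
      Cycle.map_symm_of_map_eq (by rw [hσ.map_blockCycle hn hsum, Equiv.apply_symm_apply])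
    rw [Cycle.map_perm_mul, Cycle.map_perm_mul, Equiv.Perm.inv_def, Equiv.Perm.inv_def, hσu,
      Cycle.map_symm_of_map_eq (hρ.map_blockCycle hn hsum _), hσ.map_blockCycle hn hsum,
      Equiv.apply_symm_apply]
    rfl
  rw [Fvertex_eq_koszulSign_mul deg f (hf _ hstab) (show σ = σ * ρ⁻¹ * σ⁻¹ * σ * ρ by group) I,
    koszulSign_eq_of_isBlockRotate hρ hlast, blockSum_eq_sum_block, ← sum_erase_eq_sub hmem,
    mul_comm (deg (I last))]

end Symmetries

variable [Fintype ι] [DecidableEq ι]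

theorem statement17_general (deg : ι → ℤ)
    (n bbar : ℕ) (l : Fin bbar → ℕ)
    (hpos : ∀ i, 0 < l i) (hsum : ∑ i, l i = n) (hn : 0 < n)
    (b₀ g : ℕ)
    (f : TPow k ι n →ₗ[k] k)
    -- `f = f^{(b_k),g}` is invariant (with Koszul signs) under the stabilizer
    -- of the canonical representative `\overline{(b_k)}^g` :
    (hf : ∀ τ : Equiv.Perm (Fin n),
      qoAct τ (canonEl n hn (bseqOf l b₀) g) = canonEl n hn (bseqOf l b₀) g →
      f.comp (permAct k ι deg τ) = f) :
    -- (1) exchange of adjacent blocks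
    (∀ t₀ t₁ : Fin bbar, (t₁ : ℕ) = (t₀ : ℕ) + 1 →
      ∀ (β β' : Equiv.Perm (Fin bbar)) (σ σ' ρ : Equiv.Perm (Fin n)),
        SortsBlocks l β → IsBlockPerm n l β σ →
        SortsBlocks (l ∘ Equiv.swap t₀ t₁) β' →
        IsBlockPerm n (l ∘ Equiv.swap t₀ t₁) β' σ' →
        IsBlockPerm n l (Equiv.swap t₀ t₁) ρ →
        ∀ I : Fin n → ι,
          Fvertex deg f σ I =
            msign k (blockSum deg l t₀ I * blockSum deg l t₁ I) *
              Fvertex deg f σ' (I ∘ ρ.symm)) ∧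
    -- (2) cyclic rotation within a block
    (∀ t₀ : Fin bbar, ∀ (β : Equiv.Perm (Fin bbar)) (σ ρ : Equiv.Perm (Fin n)),
      SortsBlocks l β → IsBlockPerm n l β σ → IsBlockRotate n l t₀ ρ →
      ∀ I : Fin n → ι,
        Fvertex deg f σ I =
          msign k
            (deg (I ⟨(startOf l t₀ + l t₀ - 1) % n, Nat.mod_lt _ hn⟩) *
              (blockSum deg l t₀ I -
                deg (I ⟨(startOf l t₀ + l t₀ - 1) % n, Nat.mod_lt _ hn⟩))) *
            Fvertex deg f σ (I ∘ ρ.symm)) :=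
  ⟨fun _ _ ht _ _ _ _ _ hβ hσ hβ' hσ' hρ I =>
    Fvertex_swap_adjacent_blocks deg hn hpos hsum b₀ g f hf ht hβ hσ hβ' hσ' hρ I,
   fun _ _ _ _ hβ hσ hρ I => Fvertex_rotate_block deg hn hpos hsum b₀ g f hf hβ hσ hρ I⟩

/-- the reduced string vertices satisfy the block symmetries:
(1) two adjacent blocks can be exchanged at the cost of the Koszul sign
`(−1)^{(Σ|v|)(Σ|w|)}`; (2) a block can be cyclically rotated at the cost of the
Koszul sign `(−1)^{|v_i|(|v₁|+⋯+|v_{i−1}|)}`. -/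
theorem statement17 (deg : ι → ℤ)
    (n bbar : ℕ) (hb : 1 ≤ bbar) (l : Fin bbar → ℕ)
    (hpos : ∀ i, 0 < l i) (hsum : ∑ i, l i = n) (hn : 0 < n)
    (b b₀ g : ℕ) (hbb : bbar ≤ b) (hb₀ : b₀ = b - bbar)
    (f : TPow k ι n →ₗ[k] k)
    -- `f = f^{(b_k),g}` is invariant (with Koszul signs) under the stabilizer
    -- of the canonical representative `\overline{(b_k)}^g` :
    (hf : ∀ τ : Equiv.Perm (Fin n),
      qoAct τ (canonEl n hn (bseqOf l b₀) g) = canonEl n hn (bseqOf l b₀) g →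
      f.comp (permAct k ι deg τ) = f) :
    -- (1) exchange of adjacent blocks
    (∀ t₀ t₁ : Fin bbar, (t₁ : ℕ) = (t₀ : ℕ) + 1 →
      ∀ (β β' : Equiv.Perm (Fin bbar)) (σ σ' ρ : Equiv.Perm (Fin n)),
        SortsBlocks l β → IsBlockPerm n l β σ →
        SortsBlocks (l ∘ Equiv.swap t₀ t₁) β' →
        IsBlockPerm n (l ∘ Equiv.swap t₀ t₁) β' σ' →
        IsBlockPerm n l (Equiv.swap t₀ t₁) ρ →
        ∀ I : Fin n → ι,
          Fvertex deg f σ I =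
            msign k (blockSum deg l t₀ I * blockSum deg l t₁ I) *
              Fvertex deg f σ' (I ∘ ρ.symm)) ∧
    -- (2) cyclic rotation within a block
    (∀ t₀ : Fin bbar, ∀ (β : Equiv.Perm (Fin bbar)) (σ ρ : Equiv.Perm (Fin n)),
      SortsBlocks l β → IsBlockPerm n l β σ → IsBlockRotate n l t₀ ρ →
      ∀ I : Fin n → ι,
        Fvertex deg f σ I =
          msign k
            (deg (I ⟨(startOf l t₀ + l t₀ - 1) % n, Nat.mod_lt _ hn⟩) *
              (blockSum deg l t₀ I -
                deg (I ⟨(startOf l t₀ + l t₀ - 1) % n, Nat.mod_lt _ hn⟩))) *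
            Fvertex deg f σ (I ∘ ρ.symm)) :=
  statement17_general deg n bbar l hpos hsum hn b₀ g f hf

end Paper
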